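/- Let p be prime, V ⊆ (Z/pZ)^r finite, g : V → (Z/pZ)^s a function, and suppose for every (u,v) ≠ (0,0) in (Z/pZ)^r × (Z/pZ)^s, |∑_{z ∈ V} e^{2πi(u·z + v·g(z))/p}| ≤ K. Let B, B' be boxes of intervals. Then ∑_{x ∈ (Z/pZ)^r} ∑_{y ∈ (Z/pZ)^s} |N_{B_x,B'_y}(V,g) - |V|·vol(B)·vol(B')/p^{r+s}|² ≤ K²·vol(B)·vol(B'). -/

import Mathlib

open Finset

/-- The standard additive character `e_p(t) = e^{2πi t/p}` on `ZMod p`. -/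
noncomputable def ep (p : ℕ) (t : ZMod p) : ℂ :=
  Complex.exp (2 * Real.pi * Complex.I * t.val / p)

/-- The interval `{a, a+1, ..., a+L-1}` of `L` consecutive residues mod `p`. -/
def interval (p : ℕ) (a : ZMod p) (L : ℕ) : Finset (ZMod p) :=
  (Finset.range L).image fun m : ℕ => a + (m : ZMod p)

/-!
Write `G = (ZMod p)^(r+s)`, `C = B × B'` and `S ψ = ∑ z ∈ V, ψ (z, g z)` for characters `ψ` of `G`.
Expanding the indicator of `C` in characters gives
`|G| N(q) = ∑ ψ, Ĉ ψ · conj (S ψ) · ψ q` with `Ĉ ψ = ∑ c ∈ C, ψ c`.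
The trivial character contributes exactly the main term `|V| |C|`, and each other coefficient is
at most `K |Ĉ ψ|` in norm. Orthogonality of the characters `q ↦ ψ q` (Parseval) turns the second
moment over `q` into `|G|⁻¹ ∑ ψ ≠ 0, |Ĉ ψ|² |S ψ|² ≤ K² |G|⁻¹ ∑ ψ, |Ĉ ψ|² = K² |C|`,
the last step being Parseval for the dual orthogonality `∑ ψ, ψ c · conj (ψ c') = |G| [c = c']`.
-/

open ComplexConjugate
open Fintype (card)

theorem sum_norm_sq_sum_mul_of_orthogonal {ι κ : Type*} [Fintype κ] [DecidableEq ι]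
    (e : ι → κ → ℂ) (M : ℝ)
    (he : ∀ i j, ∑ k, e i k * conj (e j k) = if i = j then (M : ℂ) else 0)
    (I : Finset ι) (a : ι → ℂ) :
    ∑ k, ‖∑ i ∈ I, a i * e i k‖ ^ 2 = M * ∑ i ∈ I, ‖a i‖ ^ 2 := by
  apply Complex.ofReal_injective
  push_cast
  simp_rw [← Complex.mul_conj', map_sum, map_mul, sum_mul_sum, Finset.mul_sum]
  rw [sum_comm]
  refine sum_congr rfl fun i hi => ?_
  rw [sum_comm]
  simp_rw [show ∀ j k, a i * e i k * (conj (a j) * conj (e j k))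
      = a i * conj (a j) * (e i k * conj (e j k)) from fun _ _ => by ring, ← Finset.mul_sum, he,
    mul_ite, mul_zero]
  rw [sum_ite_eq, if_pos hi, mul_comm]

section
variable {G : Type*} [AddCommGroup G] [Fintype G]

theorem AddChar.sum_mul_conj_eq_ite (ψ χ : AddChar G ℂ) :
    ∑ q, ψ q * conj (χ q) = if ψ = χ then (card G : ℂ) else 0 := by
  simp_rw [← AddChar.map_neg_eq_conj, ← AddChar.sub_apply, AddChar.sum_eq_ite, sub_eq_zero]

theorem AddChar.sum_apply_mul_conj_eq_ite [DecidableEq G] (a b : G) :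
    ∑ ψ : AddChar G ℂ, ψ a * conj (ψ b) = if a = b then (card G : ℂ) else 0 := by
  simp_rw [← AddChar.map_neg_eq_conj, ← AddChar.map_add_eq_mul, ← sub_eq_add_neg,
    AddChar.sum_apply_eq_ite, sub_eq_zero]

theorem AddChar.sum_sum_mul_conj_eq_ite_mem [DecidableEq G] (C : Finset G) (w : G) :
    ∑ ψ : AddChar G ℂ, (∑ c ∈ C, ψ c) * conj (ψ w) = if w ∈ C then (card G : ℂ) else 0 := by
  simp_rw [sum_mul]
  rw [sum_comm]
  simp_rw [AddChar.sum_apply_mul_conj_eq_ite, sum_ite_eq']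

theorem card_mul_card_filter_sub_mem [DecidableEq G] {α : Type*} (V : Finset α) (φ : α → G)
    (C : Finset G) (q : G) :
    (card G : ℂ) * #{z ∈ V | φ z - q ∈ C}
      = ∑ ψ : AddChar G ℂ, (∑ c ∈ C, ψ c) * conj (∑ z ∈ V, ψ (φ z)) * ψ q := by
  have hconj (ψ : AddChar G ℂ) (z : α) : conj (ψ (φ z - q)) = conj (ψ (φ z)) * ψ q := by
    rw [sub_eq_add_neg, AddChar.map_add_eq_mul, map_mul, AddChar.map_neg_eq_conj, Complex.conj_conj]
  simp_rw [card_filter, Nat.cast_sum, Nat.cast_ite, Nat.cast_one, Nat.cast_zero, mul_sum, mul_ite,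
    mul_one, mul_zero, ← AddChar.sum_sum_mul_conj_eq_ite_mem, hconj, map_sum, mul_sum, sum_mul]
  rw [sum_comm]
  simp_rw [mul_assoc]

theorem sum_sq_card_filter_sub_mem_sub_le [DecidableEq G] {α : Type*} (V : Finset α)
    (φ : α → G) (C : Finset G) (K : ℝ) (hK : ∀ ψ : AddChar G ℂ, ψ ≠ 0 → ‖∑ z ∈ V, ψ (φ z)‖ ≤ K) :
    ∑ q, ((#{z ∈ V | φ z - q ∈ C} : ℝ) - #V * #C / card G) ^ 2 ≤ K ^ 2 * #C := by
  set a : AddChar G ℂ → ℂ := fun ψ => (∑ c ∈ C, ψ c) * conj (∑ z ∈ V, ψ (φ z))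
  have hG : (0 : ℝ) < card G := by exact_mod_cast Fintype.card_pos
  have hdev (q : G) : ((card G * ((#{z ∈ V | φ z - q ∈ C} : ℝ) - #V * #C / card G) : ℝ) : ℂ)
      = ∑ ψ ∈ univ.erase 0, a ψ * ψ q := by
    have h0 : a 0 * (0 : AddChar G ℂ) q = #C * #V := by simp [a]
    rw [← add_left_inj (a 0 * (0 : AddChar G ℂ) q), sum_erase_add _ _ (mem_univ _), h0]
    push_cast
    rw [mul_sub, card_mul_card_filter_sub_mem, mul_div_cancel₀ _ (by exact_mod_cast hG.ne'),
      mul_comm (#V : ℂ), sub_add_cancel]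
  have hparseval : ∑ q, ‖∑ ψ ∈ univ.erase 0, a ψ * ψ q‖ ^ 2
      = card G * ∑ ψ ∈ univ.erase 0, ‖a ψ‖ ^ 2 :=
    sum_norm_sq_sum_mul_of_orthogonal (fun (ψ : AddChar G ℂ) q => ψ q) (card G)
      (fun ψ χ => by rw [Complex.ofReal_natCast, AddChar.sum_mul_conj_eq_ite]) _ a
  have hC : ∑ ψ : AddChar G ℂ, ‖∑ c ∈ C, ψ c‖ ^ 2 = card G * #C := by
    simpa using sum_norm_sq_sum_mul_of_orthogonal (fun c (ψ : AddChar G ℂ) => ψ c) (card G)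
      (fun c d => by rw [Complex.ofReal_natCast, AddChar.sum_apply_mul_conj_eq_ite]) C 1
  have hbound : ∑ ψ ∈ univ.erase 0, ‖a ψ‖ ^ 2 ≤ K ^ 2 * ∑ ψ : AddChar G ℂ, ‖∑ c ∈ C, ψ c‖ ^ 2 := by
    rw [mul_sum]
    refine (sum_le_sum fun ψ hψ => ?_).trans
      (sum_le_sum_of_subset_of_nonneg (erase_subset _ _) fun _ _ _ => by positivity)
    rw [norm_mul, Complex.norm_conj, mul_pow, mul_comm]
    gcongr
    exact hK ψ (ne_of_mem_erase hψ)
  refine le_of_mul_le_mul_left ?_ (pow_pos hG 2)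
  calc (card G : ℝ) ^ 2 * ∑ q, ((#{z ∈ V | φ z - q ∈ C} : ℝ) - #V * #C / card G) ^ 2
      = ∑ q, ‖∑ ψ ∈ univ.erase 0, a ψ * ψ q‖ ^ 2 := by
        simp_rw [mul_sum, ← hdev, Complex.norm_real, Real.norm_eq_abs, sq_abs, mul_pow]
    _ = card G * ∑ ψ ∈ univ.erase 0, ‖a ψ‖ ^ 2 := hparseval
    _ ≤ card G * (K ^ 2 * (card G * #C)) := by rw [← hC]; gcongr
    _ = card G ^ 2 * (K ^ 2 * #C) := by ring
end

theorem card_interval {p L : ℕ} (a : ZMod p) (hL : L ≤ p) : #(interval p a L) = L := by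
  rw [interval, card_image_of_injOn, card_range]
  intro m hm m' hm' h
  have hval : ∀ k ∈ (range L : Set ℕ), (k : ZMod p).val = k := fun k hk =>
    ZMod.val_cast_of_lt ((mem_range.1 hk).trans_le hL)
  rw [← hval m hm, ← hval m' hm', add_left_cancel h]

theorem Fintype.sum_sumArrow {ι κ γ M : Type*} [Fintype ι] [Fintype κ] [DecidableEq ι]
    [DecidableEq κ] [Fintype γ] [AddCommMonoid M] (F : (ι ⊕ κ → γ) → M) :
    ∑ q, F q = ∑ x, ∑ y, F (Sum.elim x y) := by
  rw [← (Equiv.sumArrowEquivProdArrow _ _ _).symm.sum_comp, Fintype.sum_prod_type]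
  rfl

section
variable {n : ℕ} [NeZero n]

theorem ep_eq_stdAddChar (t : ZMod n) : ep n t = ZMod.stdAddChar t := by
  rw [ZMod.stdAddChar_apply, ZMod.toCircle_apply, ep]

noncomputable def dotChar {ι : Type*} [Fintype ι] (u : ι → ZMod n) : AddChar (ι → ZMod n) ℂ :=
  ZMod.stdAddChar.compAddMonoidHom
    { toFun := (u ⬝ᵥ ·), map_zero' := dotProduct_zero u, map_add' := dotProduct_add u }

variable {ι : Type*} [Fintype ι]

theorem dotChar_apply (u x : ι → ZMod n) : dotChar u x = ZMod.stdAddChar (u ⬝ᵥ x) := rfl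

theorem dotChar_zero : dotChar (0 : ι → ZMod n) = 0 := by
  ext x
  simp [dotChar_apply]

theorem dotChar_injective : Function.Injective (dotChar : (ι → ZMod n) → AddChar _ ℂ) := by
  classical
  intro u u' h
  ext i
  simpa [dotChar_apply, dotProduct_single, ZMod.injective_stdAddChar.eq_iff] using
    DFunLike.congr_fun h (Pi.single i 1)

theorem dotChar_bijective [DecidableEq ι] :
    Function.Bijective (dotChar : (ι → ZMod n) → AddChar _ ℂ) :=
  (Fintype.bijective_iff_injective_and_card _).2 ⟨dotChar_injective, AddChar.card_eq.symm⟩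

theorem norm_sum_addChar_sumElim_le {κ α : Type*} [Fintype κ] [DecidableEq ι] [DecidableEq κ]
    (V : Finset α) (f : α → ι → ZMod n) (h : α → κ → ZMod n) (K : ℝ)
    (hK : ∀ (u : ι → ZMod n) (v : κ → ZMod n), (u, v) ≠ (0, 0) →
      ‖∑ z ∈ V, ep n (∑ i, u i * f z i + ∑ j, v j * h z j)‖ ≤ K)
    (ψ : AddChar (ι ⊕ κ → ZMod n) ℂ) (hψ : ψ ≠ 0) :
    ‖∑ z ∈ V, ψ (Sum.elim (f z) (h z))‖ ≤ K := by
  obtain ⟨w, rfl⟩ := dotChar_bijective.2 ψ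
  have hw : (w ∘ Sum.inl, w ∘ Sum.inr) ≠ (0, 0) := fun hw => hψ <| by
    rw [(Equiv.sumArrowEquivProdArrow _ _ _).injective (a₁ := w) (a₂ := 0) hw, dotChar_zero]
  simpa [dotChar_apply, ep_eq_stdAddChar, dotProduct, Fintype.sum_sum_type] using hK _ _ hw

end

theorem stmt_15_general (p r s : ℕ) [NeZero p]
    (V : Finset (Fin r → ZMod p)) (g : (Fin r → ZMod p) → (Fin s → ZMod p)) (K : ℝ)
    (hK : ∀ (u : Fin r → ZMod p) (v : Fin s → ZMod p), (u, v) ≠ (0, 0) →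
      ‖∑ z ∈ V, ep p (∑ i, u i * z i + ∑ j, v j * g z j)‖ ≤ K)
    (a : Fin r → ZMod p) (L : Fin r → ℕ) (hL : ∀ i, L i ≤ p)
    (b : Fin s → ZMod p) (L' : Fin s → ℕ) (hL' : ∀ j, L' j ≤ p) :
    ∑ x : Fin r → ZMod p, ∑ y : Fin s → ZMod p,
        |((V.filter fun z =>
            (∀ i, z i - x i ∈ interval p (a i) (L i)) ∧
            (∀ j, g z j - y j ∈ interval p (b j) (L' j))).card : ℝ) -
          (V.card : ℝ) * (∏ i, (L i : ℝ)) * (∏ j, (L' j : ℝ)) / (p : ℝ) ^ (r + s)| ^ 2 ≤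
      K ^ 2 * (∏ i, (L i : ℝ)) * ∏ j, (L' j : ℝ) := by
  classical
  set C := Fintype.piFinset (Sum.elim (fun i => interval p (a i) (L i))
    fun j => interval p (b j) (L' j))
  have hC : (#C : ℝ) = (∏ i, (L i : ℝ)) * ∏ j, (L' j : ℝ) := by
    simp [C, Fintype.card_piFinset, Fintype.prod_sum_type, card_interval _ (hL _),
      card_interval _ (hL' _)]
  have hG : (card (Fin r ⊕ Fin s → ZMod p) : ℝ) = p ^ (r + s) := by simp
  have hmem (x : Fin r → ZMod p) (y : Fin s → ZMod p) (z : Fin r → ZMod p) :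
      ((∀ i, z i - x i ∈ interval p (a i) (L i)) ∧ (∀ j, g z j - y j ∈ interval p (b j) (L' j)))
        ↔ Sum.elim z (g z) - Sum.elim x y ∈ C := by
    simp [C, Fintype.mem_piFinset, Sum.forall]
  have key := sum_sq_card_filter_sub_mem_sub_le V (fun z => Sum.elim z (g z)) C K
    (norm_sum_addChar_sumElim_le V id g K hK)
  rw [Fintype.sum_sumArrow, hC, hG] at key
  simp_rw [sq_abs, mul_assoc] at key ⊢
  convert key using 8 with x _ y _ z
  exact hmem x y z

theorem stmt_15 (p r s : ℕ) (hp : p.Prime) [NeZero p]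
    (V : Finset (Fin r → ZMod p)) (g : (Fin r → ZMod p) → (Fin s → ZMod p)) (K : ℝ)
    (hK : ∀ (u : Fin r → ZMod p) (v : Fin s → ZMod p), (u, v) ≠ (0, 0) →
      ‖∑ z ∈ V, ep p (∑ i, u i * z i + ∑ j, v j * g z j)‖ ≤ K)
    (a : Fin r → ZMod p) (L : Fin r → ℕ) (hL : ∀ i, L i ≤ p)
    (b : Fin s → ZMod p) (L' : Fin s → ℕ) (hL' : ∀ j, L' j ≤ p) :
    ∑ x : Fin r → ZMod p, ∑ y : Fin s → ZMod p,
        |((V.filter fun z =>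
            (∀ i, z i - x i ∈ interval p (a i) (L i)) ∧
            (∀ j, g z j - y j ∈ interval p (b j) (L' j))).card : ℝ) -
          (V.card : ℝ) * (∏ i, (L i : ℝ)) * (∏ j, (L' j : ℝ)) / (p : ℝ) ^ (r + s)| ^ 2 ≤
      K ^ 2 * (∏ i, (L i : ℝ)) * ∏ j, (L' j : ℝ) :=
  stmt_15_general p r s V g K hK a L hL b L' hL'
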